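/- arXiv:2601.15924 — 4 statements merged into one kernel-verified Lean document; each statement's English description precedes it below -/
import Mathlib

section
/- Let ω ∈ (0,1] and f ∈ [0,1]. Define f'(p) = f if p < ω and f'(p) = 1 − f if p ≥ ω, and Ω(p, f) = (e − f'(p))^{ω − p}. Then the function p ↦ Ω(p, f) is continuous on all of [0,1]. -/
/-- The class–confidence aware weighting
`Ω(p, f) = (e − f'(p))^{ω − p}` is continuous on all of `[0,1]`. -/
theorem ccar_continuous_on_unit_interval
    (ω f : ℝ) (hω : ω ∈ Set.Ioc (0 : ℝ) 1) (hf : f ∈ Set.Icc (0 : ℝ) 1)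
    (f' : ℝ → ℝ) (hf' : ∀ p, f' p = if p < ω then f else 1 - f)
    (Ω : ℝ → ℝ) (hΩ : ∀ p, Ω p = (Real.exp 1 - f' p) ^ (ω - p)) :
    ContinuousOn Ω (Set.Icc (0 : ℝ) 1) := by
  have he : (2.7 : ℝ) < Real.exp 1 := by
    have := Real.exp_one_gt_d9; linarith
  have hf'range : ∀ p, 0 ≤ f' p ∧ f' p ≤ 1 := by
    intro p
    rw [hf' p]
    split_ifs <;> constructor <;> linarith [hf.1, hf.2]
  have hpos : ∀ p, (0 : ℝ) < Real.exp 1 - f' p := by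
    intro p; linarith [(hf'range p).2]
  -- rewrite Ω as exp (log (e - f' p) * (ω - p))
  have hΩ' : ∀ p, Ω p = Real.exp (Real.log (Real.exp 1 - f' p) * (ω - p)) := by
    intro p
    rw [hΩ p, Real.rpow_def_of_pos (hpos p)]
  set g : ℝ → ℝ := fun p => Real.log (Real.exp 1 - f' p) * (ω - p) with hg
  -- bound on the log
  have hlog : ∀ p, 0 ≤ Real.log (Real.exp 1 - f' p) ∧
      Real.log (Real.exp 1 - f' p) ≤ 1 := by
    intro p
    constructor
    · apply Real.log_nonneg; linarith [(hf'range p).2]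
    · calc Real.log (Real.exp 1 - f' p) ≤ Real.log (Real.exp 1) := by
            apply Real.log_le_log (hpos p); linarith [(hf'range p).1]
        _ = 1 := Real.log_exp 1
  have hgcont : ∀ x ∈ Set.Icc (0 : ℝ) 1, ContinuousWithinAt g (Set.Icc 0 1) x := by
    intro x _
    rcases lt_trichotomy x ω with hx | hx | hx
    · -- x < ω : locally f' = f
      apply ContinuousAt.continuousWithinAt
      have hev : ∀ᶠ p in nhds x, g p = Real.log (Real.exp 1 - f) * (ω - p) := by
        filter_upwards [eventually_lt_nhds hx] with p hp
        simp [hg, hf' p, hp]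
      have hc : ContinuousAt (fun p => Real.log (Real.exp 1 - f) * (ω - p)) x := by
        fun_prop
      exact hc.congr (Filter.EventuallyEq.symm hev)
    · -- x = ω : squeeze
      apply ContinuousAt.continuousWithinAt
      subst hx
      have hg0 : g x = 0 := by simp [hg]
      rw [ContinuousAt, hg0]
      refine squeeze_zero_norm (f := g) (a := fun p => |x - p|) ?_ ?_
      · intro p
        rw [Real.norm_eq_abs, hg, abs_mul]
        have h1 := (hlog p).1
        have h2 := (hlog p).2
        calc |Real.log (Real.exp 1 - f' p)| * |x - p| ≤ 1 * |x - p| := by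
              apply mul_le_mul_of_nonneg_right _ (abs_nonneg _)
              rw [abs_of_nonneg h1]; exact h2
          _ = |x - p| := one_mul _
      · have h : Filter.Tendsto (fun p : ℝ => x - p) (nhds x) (nhds (x - x)) :=
          tendsto_const_nhds.sub Filter.tendsto_id
        rw [sub_self] at h
        simpa using h.abs
    · -- x > ω : locally f' = 1 - f
      apply ContinuousAt.continuousWithinAt
      have hev : ∀ᶠ p in nhds x, g p = Real.log (Real.exp 1 - (1 - f)) * (ω - p) := by
        filter_upwards [eventually_gt_nhds hx] with p hp
        have : ¬ p < ω := by linarith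
        simp [hg, hf' p, this]
      have hc : ContinuousAt (fun p => Real.log (Real.exp 1 - (1 - f)) * (ω - p)) x := by
        fun_prop
      exact hc.congr (Filter.EventuallyEq.symm hev)
  have : ContinuousOn g (Set.Icc 0 1) := hgcont
  have hcont : ContinuousOn (fun p => Real.exp (g p)) (Set.Icc (0:ℝ) 1) :=
    Real.continuous_exp.comp_continuousOn this
  exact hcont.congr fun p _ => hΩ' p
end

section
/- Let ω ∈ (0,1] and f ∈ [0,1]. Define f'(p) = f if p < ω and f'(p) = 1 − f if p ≥ ω, and Ω(p, f) = (e − f'(p))^{ω − p}. Then p ↦ Ω(p, f) is Lipschitz continuous on [0,1] with Lipschitz constant e, i.e., |Ω(p₁, f) − Ω(p₂, f)| ≤ e·|p₁ − p₂| for all p₁, p₂ ∈ [0,1]. -/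
/-!
Both branches have the form `p ↦ b ^ (ω - p)` with `1 ≤ e - 1 ≤ b ≤ e`. On `[0, 1]` the exponent is
at most `1`, so the derivative is bounded by `b ^ 1 * log b ≤ e`. Both branches equal `1` at
`p = ω`, so the bounds on either side of `ω` add up across the switch by the triangle inequality.
-/

open Real Set

lemma abs_rpow_sub_rpow_le {b c s t : ℝ} (hb : 1 ≤ b) (hs : s ≤ c) (ht : t ≤ c) :
    |b ^ s - b ^ t| ≤ b ^ c * log b * |s - t| := by
  have hb₀ : 0 < b := one_pos.trans_le hb
  have hderiv : ∀ x ∈ Iic c, HasDerivWithinAt (fun x => b ^ x) (b ^ x * log b) (Iic c) x :=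
    fun x _ => (hasStrictDerivAt_const_rpow hb₀ x).hasDerivAt.hasDerivWithinAt
  have hbound : ∀ x ∈ Iic c, ‖b ^ x * log b‖ ≤ b ^ c * log b := fun x hx => by
    rw [Real.norm_of_nonneg (by positivity [log_nonneg hb])]
    gcongr
    · exact log_nonneg hb
    · exact hx
  simpa only [Real.norm_eq_abs] using
    (convex_Iic c).norm_image_sub_le_of_norm_hasDerivWithin_le hderiv hbound ht hs

lemma abs_rpow_sub_sub_rpow_sub_le {b ω x y : ℝ} (hb : 1 ≤ b) (hbe : b ≤ exp 1)
    (hx : ω - 1 ≤ x) (hy : ω - 1 ≤ y) :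
    |b ^ (ω - x) - b ^ (ω - y)| ≤ exp 1 * |x - y| := by
  have hlog : log b ≤ 1 := by simpa using log_le_log (one_pos.trans_le hb) hbe
  calc |b ^ (ω - x) - b ^ (ω - y)| ≤ b ^ (1 : ℝ) * log b * |(ω - x) - (ω - y)| :=
        abs_rpow_sub_rpow_le hb (by linarith) (by linarith)
    _ ≤ exp 1 * 1 * |x - y| := by
        rw [rpow_one, sub_sub_sub_cancel_left, abs_sub_comm]
        gcongr
        exact log_nonneg hb
    _ = exp 1 * |x - y| := by rw [mul_one]

lemma abs_ite_lt_sub_ite_lt_le {S : Set ℝ} [S.OrdConnected] {g h : ℝ → ℝ} {ω K : ℝ}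
    (hgh : g ω = h ω) (hg : ∀ x ∈ S, ∀ y ∈ S, |g x - g y| ≤ K * |x - y|)
    (hh : ∀ x ∈ S, ∀ y ∈ S, |h x - h y| ≤ K * |x - y|) {x y : ℝ} (hx : x ∈ S) (hy : y ∈ S) :
    |(if x < ω then g x else h x) - (if y < ω then g y else h y)| ≤ K * |x - y| := by
  wlog hxy : x ≤ y generalizing x y
  · rw [abs_sub_comm, abs_sub_comm x]
    exact this hy hx (le_of_not_ge hxy)
  rcases lt_or_ge y ω with hyω | hωy
  · rw [if_pos (hxy.trans_lt hyω), if_pos hyω]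
    exact hg x hx y hy
  rcases lt_or_ge x ω with hxω | hωx
  · rw [if_pos hxω, if_neg hωy.not_gt]
    have hω : ω ∈ S := Set.OrdConnected.out' hx hy ⟨hxω.le, hωy⟩
    calc |g x - h y| ≤ |g x - g ω| + |h ω - h y| := by
          rw [hgh]; exact abs_sub_le _ _ _
      _ ≤ K * |x - ω| + K * |ω - y| := add_le_add (hg x hx ω hω) (hh ω hω y hy)
      _ = K * |x - y| := by
          rw [abs_of_nonpos (by linarith : x - ω ≤ 0), abs_of_nonpos (by linarith : ω - y ≤ 0),
            abs_of_nonpos (by linarith : x - y ≤ 0)]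
          ring
  · rw [if_neg hωx.not_gt, if_neg hωy.not_gt]
    exact hh x hx y hy

/-- The weighting `Ω(p, f) = (e − f'(p))^{ω − p}` is Lipschitz
continuous on `[0,1]` with Lipschitz constant `e`. -/
theorem ccar_lipschitz
    (ω f : ℝ) (hω : ω ∈ Set.Ioc (0 : ℝ) 1) (hf : f ∈ Set.Icc (0 : ℝ) 1)
    (f' : ℝ → ℝ) (hf' : ∀ p, f' p = if p < ω then f else 1 - f)
    (Ω : ℝ → ℝ) (hΩ : ∀ p, Ω p = (Real.exp 1 - f' p) ^ (ω - p)) :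
    ∀ p₁ ∈ Set.Icc (0 : ℝ) 1, ∀ p₂ ∈ Set.Icc (0 : ℝ) 1,
      |Ω p₁ - Ω p₂| ≤ Real.exp 1 * |p₁ - p₂| := by
  have he : 2 < exp 1 := exp_one_gt_two
  have hΩ_ite : ∀ p,
      Ω p = if p < ω then (exp 1 - f) ^ (ω - p) else (exp 1 - (1 - f)) ^ (ω - p) :=
    fun p => by rw [hΩ, hf']; split_ifs <;> rfl
  have piece_bound : ∀ b, 1 ≤ b → b ≤ exp 1 → ∀ x ∈ Icc (0 : ℝ) 1, ∀ y ∈ Icc (0 : ℝ) 1,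
      |b ^ (ω - x) - b ^ (ω - y)| ≤ exp 1 * |x - y| := fun b hb hbe x hx y hy =>
    abs_rpow_sub_sub_rpow_sub_le hb hbe (by linarith [hω.2, hx.1]) (by linarith [hω.2, hy.1])
  intro p₁ hp₁ p₂ hp₂
  rw [hΩ_ite, hΩ_ite]
  refine abs_ite_lt_sub_ite_lt_le (g := fun p => (exp 1 - f) ^ (ω - p))
    (h := fun p => (exp 1 - (1 - f)) ^ (ω - p)) ?_ ?_ ?_ hp₁ hp₂
  · simp only [sub_self, rpow_zero]
  · exact piece_bound _ (by linarith [hf.2]) (by linarith [hf.1])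
  · exact piece_bound _ (by linarith [hf.1]) (by linarith [hf.2])
end

section
/- Let ω ∈ (0,1] and f ∈ [0,1]. Define f'(p) = f if p < ω and f'(p) = 1 − f if p ≥ ω, and Ω(p, f) = (e − f'(p))^{ω − p}. Then p ↦ Ω(p, f) is strictly decreasing on [0,1]. -/
/-!
On each side of the pivot `ω` the weight is `b ^ (ω - p)` with base `b = e - f` or `e - (1 - f)`,
both larger than `1` because `e > 2`, so each branch is strictly decreasing. The two branches both
equal `1` at `p = ω`, so the jump at the pivot goes downward and the glued function stays strictly
decreasing.
-/

theorem StrictAnti.ite_lt {α β : Type*} [LinearOrder α] [Preorder β] {f g : α → β}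
    (hf : StrictAnti f) (hg : StrictAnti g) (a : α) (hfg : g a ≤ f a) :
    StrictAnti fun x ↦ if x < a then f x else g x :=
  hf.ite' hg (fun _ _ hxy hy ↦ hxy.trans hy) fun _ _ hx hy _ ↦
    ((hg.antitone (not_lt.1 hy)).trans hfg).trans_lt (hf hx)

theorem Real.strictAnti_rpow_const_sub {b : ℝ} (hb : 1 < b) (c : ℝ) :
    StrictAnti fun p : ℝ ↦ b ^ (c - p) :=
  (Real.strictMono_rpow_of_base_gt_one hb).comp_strictAnti fun _ _ h ↦ sub_lt_sub_left h c

theorem ccar_strict_anti_general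
    (ω f : ℝ) (hf : f ∈ Set.Icc (0 : ℝ) 1)
    (f' : ℝ → ℝ) (hf' : ∀ p, f' p = if p < ω then f else 1 - f)
    (Ω : ℝ → ℝ) (hΩ : ∀ p, Ω p = (Real.exp 1 - f' p) ^ (ω - p)) :
    StrictAntiOn Ω (Set.Icc (0 : ℝ) 1) := by
  have hb₁ : 1 < Real.exp 1 - f := by linarith [hf.2, Real.exp_one_gt_two]
  have hb₂ : 1 < Real.exp 1 - (1 - f) := by linarith [hf.1, Real.exp_one_gt_two]
  have hΩ_ite : Ω = fun p ↦
      if p < ω then (Real.exp 1 - f) ^ (ω - p) else (Real.exp 1 - (1 - f)) ^ (ω - p) := by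
    funext p
    rw [hΩ, hf']
    split_ifs <;> rfl
  rw [hΩ_ite]
  refine (StrictAnti.ite_lt (Real.strictAnti_rpow_const_sub hb₁ ω)
    (Real.strictAnti_rpow_const_sub hb₂ ω) ω ?_).strictAntiOn _
  simp

/-- The weighting `Ω(p, f) = (e − f'(p))^{ω − p}` is strictly
decreasing on `[0,1]`. -/
theorem ccar_strict_anti
    (ω f : ℝ) (hω : ω ∈ Set.Ioc (0 : ℝ) 1) (hf : f ∈ Set.Icc (0 : ℝ) 1)
    (f' : ℝ → ℝ) (hf' : ∀ p, f' p = if p < ω then f else 1 - f)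
    (Ω : ℝ → ℝ) (hΩ : ∀ p, Ω p = (Real.exp 1 - f' p) ^ (ω - p)) :
    StrictAntiOn Ω (Set.Icc (0 : ℝ) 1) :=
  ccar_strict_anti_general ω f hf f' hf' Ω hΩ
end

section
/- Let K ≥ 1, let t be a fixed index in {1,…,K}, let γ > 1 and ω ∈ (0,1] be real numbers. For z ∈ ℝ^K define softmax probabilities p_i(z) = exp(z_i)/∑_{j=1}^K exp(z_j), let p_t = p_t(z), and define the total loss L(z) = γ^{ω − p_t(z)} · (−log p_t(z)). Then L is differentiable at every z ∈ ℝ^K, and its gradient equals ∇_z L = Ψ(p_t, γ)·(p(z) − e_t), where the scalar modulation factor is Ψ(p_t, γ) = γ^{ω − p_t}·(1 − p_t · log γ · log p_t) and e_t is the t-th standard basis vector. -/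
/-!
Write `p_t = exp (z_t - log ∑ⱼ exp z_j)`: the gradient of the log-sum-exp is the softmax vector `p`,
so `∇ p_t = p_t (e_t - p)`. The loss is `g ∘ p_t` with `g q = γ ^ (ω - q) · (-log q)`, and
`g' q = -Ψ q / q`; in the chain rule the factor `p_t` cancels, leaving `Ψ p_t · (p - e_t)`.
-/

open Real

namespace Real

variable {ι : Type*} [Fintype ι]

noncomputable def softmax (w : ι → ℝ) (i : ι) : ℝ := exp (w i) / ∑ j, exp (w j)

lemma sum_exp_pos [Nonempty ι] (w : ι → ℝ) : 0 < ∑ j, exp (w j) :=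
  Finset.sum_pos (fun _ _ => exp_pos _) Finset.univ_nonempty

lemma softmax_pos (w : ι → ℝ) (i : ι) : 0 < softmax w i :=
  have : Nonempty ι := ⟨i⟩
  div_pos (exp_pos _) (sum_exp_pos w)

lemma softmax_eq_exp_sub_log (w : ι → ℝ) (i : ι) :
    softmax w i = exp (w i - log (∑ j, exp (w j))) := by
  have : Nonempty ι := ⟨i⟩
  rw [exp_sub, exp_log (sum_exp_pos w), softmax]

lemma hasFDerivAt_log_sum_exp [Nonempty ι] (z : ι → ℝ) :
    HasFDerivAt (fun w : ι → ℝ => log (∑ j, exp (w j)))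
      (∑ i, softmax z i • (ContinuousLinearMap.proj i : (ι → ℝ) →L[ℝ] ℝ)) z := by
  have hsum : HasFDerivAt (fun w : ι → ℝ => ∑ j, exp (w j))
      (∑ i, exp (z i) • (ContinuousLinearMap.proj i : (ι → ℝ) →L[ℝ] ℝ)) z :=
    HasFDerivAt.fun_sum fun i _ => (hasFDerivAt_apply i z).exp
  refine (hsum.log (sum_exp_pos z).ne').congr_fderiv ?_
  rw [Finset.smul_sum]
  simp only [smul_smul, softmax, div_eq_inv_mul]

lemma hasFDerivAt_softmax (z : ι → ℝ) (t : ι) :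
    HasFDerivAt (fun w => softmax w t)
      (softmax z t • ((ContinuousLinearMap.proj t : (ι → ℝ) →L[ℝ] ℝ) -
        ∑ i, softmax z i • ContinuousLinearMap.proj i)) z := by
  have : Nonempty ι := ⟨t⟩
  have h := ((hasFDerivAt_apply t z).fun_sub (hasFDerivAt_log_sum_exp z)).exp
  simpa only [← softmax_eq_exp_sub_log] using h

lemma hasDerivAt_rpow_sub_mul_neg_log {γ q : ℝ} (ω : ℝ) (hγ : 0 < γ) (hq : 0 < q) :
    HasDerivAt (fun q => γ ^ (ω - q) * -log q)
      (-(γ ^ (ω - q) * (1 - q * log γ * log q)) / q) q := by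
  have hpow : HasDerivAt (fun q => γ ^ (ω - q)) (γ ^ (ω - q) * log γ * -1) q :=
    (hasStrictDerivAt_const_rpow hγ (ω - q)).hasDerivAt.comp q ((hasDerivAt_id q).const_sub ω)
  refine (hpow.mul (hasDerivAt_log hq.ne').neg).congr_deriv ?_
  rw [Pi.neg_apply]
  field_simp
  ring

end Real

lemma ContinuousLinearMap.sum_mul_sub_ite_smul_proj {R ι : Type*} [CommRing R] [TopologicalSpace R]
    [IsTopologicalRing R] [Fintype ι] [DecidableEq ι] (c : R) (a : ι → R) (t : ι) :
    ∑ i, (c * (a i - if i = t then 1 else 0)) • (ContinuousLinearMap.proj i : (ι → R) →L[R] R) =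
      c • (∑ i, a i • ContinuousLinearMap.proj i - (ContinuousLinearMap.proj t : (ι → R) →L[R] R)) := by
  ext x
  simp [mul_sub, sub_mul, ite_mul, Finset.sum_sub_distrib, Finset.mul_sum, mul_assoc]

theorem ccar_total_loss_gradient_general
    (K : ℕ) (t : Fin K) (γ ω : ℝ) (hγ : 1 < γ)
    (p : (Fin K → ℝ) → Fin K → ℝ)
    (hp : ∀ w i, p w i = Real.exp (w i) / ∑ j, Real.exp (w j))
    (L : (Fin K → ℝ) → ℝ)
    (hL : ∀ w, L w = γ ^ (ω - p w t) * (-Real.log (p w t)))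
    (Ψ : ℝ → ℝ)
    (hΨ : ∀ q, Ψ q = γ ^ (ω - q) * (1 - q * Real.log γ * Real.log q)) :
    ∀ z : Fin K → ℝ,
      HasFDerivAt L
        (∑ i, (Ψ (p z t) * (p z i - (if i = t then (1 : ℝ) else 0))) •
          (ContinuousLinearMap.proj i : ((Fin K → ℝ) →L[ℝ] ℝ))) z := by
  intro z
  have hp_softmax : p = softmax := funext fun w => funext (hp w)
  have hL_comp : L = (fun q => γ ^ (ω - q) * -log q) ∘ fun w => softmax w t :=
    funext fun w => by rw [hL, hp_softmax]; rfl
  have h := (hasDerivAt_rpow_sub_mul_neg_log ω (zero_lt_one.trans hγ)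
    (softmax_pos z t)).comp_hasFDerivAt z (hasFDerivAt_softmax z t)
  rw [hL_comp, ContinuousLinearMap.sum_mul_sub_ite_smul_proj, hp_softmax, hΨ]
  refine h.congr_fderiv ?_
  rw [smul_smul, div_mul_cancel₀ _ (softmax_pos z t).ne', neg_smul, ← smul_neg, neg_sub]

/-- The class–confidence aware reweighted cross-entropy loss
`L(z) = γ^{ω − p_t(z)}·(−log p_t(z))` over the logits `z` is differentiable
with gradient `∇_z L = Ψ(p_t, γ)·(p(z) − e_t)`, where
`Ψ(p_t, γ) = γ^{ω − p_t}·(1 − p_t·log γ·log p_t)`. -/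
theorem ccar_total_loss_gradient
    (K : ℕ) (hK : 1 ≤ K) (t : Fin K) (γ ω : ℝ) (hγ : 1 < γ)
    (hω : ω ∈ Set.Ioc (0 : ℝ) 1)
    (p : (Fin K → ℝ) → Fin K → ℝ)
    (hp : ∀ w i, p w i = Real.exp (w i) / ∑ j, Real.exp (w j))
    (L : (Fin K → ℝ) → ℝ)
    (hL : ∀ w, L w = γ ^ (ω - p w t) * (-Real.log (p w t)))
    (Ψ : ℝ → ℝ)
    (hΨ : ∀ q, Ψ q = γ ^ (ω - q) * (1 - q * Real.log γ * Real.log q)) :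
    ∀ z : Fin K → ℝ,
      HasFDerivAt L
        (∑ i, (Ψ (p z t) * (p z i - (if i = t then (1 : ℝ) else 0))) •
          (ContinuousLinearMap.proj i : ((Fin K → ℝ) →L[ℝ] ℝ))) z :=
  ccar_total_loss_gradient_general K t γ ω hγ p hp L hL Ψ hΨ
end
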